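/- Let $L = \frac{1}{b_n}\partial \cdots \frac{1}{b_1}\partial \frac{1}{b_0}$ with $b_0, \dots, b_n$ nonvanishing continuous, let $r$ be continuous, and define the main formal powers $P_k^{(m)} = (mn+k-1)! \left(\mathcal{I}_{1,n} \circ (r b_0 \cdot)\right)^m \mathcal{I}_{1,k-1}$. Then $L[b_0 P_k^{(m)}] = \frac{(mn+k-1)!}{((m-1)n+k-1)!}\, r b_0 P_k^{(m-1)}$ for all $m \ge 1$, and $L[b_0 P_k^{(0)}] = 0$. -/
import Mathlib


noncomputable def Dchain (b : ℕ → ℝ → ℝ) : ℕ → (ℝ → ℝ) → (ℝ → ℝ)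
  | 0, y => fun x => y x / b 0 x
  | m + 1, y => fun x => deriv (Dchain b m y) x / b (m + 1) x

/-- `Rint b x0 n f n = ∫ b_1 ∫ b_2 ⋯ ∫ b_n f` built from the inside out. -/
noncomputable def Rint (b : ℕ → ℝ → ℝ) (x0 : ℝ) (n : ℕ) (f : ℝ → ℝ) : ℕ → ℝ → ℝ
  | 0 => f
  | m + 1 => fun x => ∫ s in x0..x, b (n - m) s * Rint b x0 n f m s

/-- `𝓘_{1,k} = ∫ b_1 ⋯ ∫ b_k 1`, with `𝓘_{1,0} ≡ 1`. -/
noncomputable def I1 (b : ℕ → ℝ → ℝ) (x0 : ℝ) (k : ℕ) : ℝ → ℝ :=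
  Rint b x0 k (fun _ => 1) k

/-- `(𝓘_{1,n} ∘ (r b₀ ·))^m 𝓘_{1,k-1}`; the main formal power is
`P_k^{(m)} = (mn+k-1)! ⬝ formalQ … m`. -/
noncomputable def formalQ (b : ℕ → ℝ → ℝ) (r : ℝ → ℝ) (x0 : ℝ) (n k : ℕ) :
    ℕ → ℝ → ℝ
  | 0 => I1 b x0 (k - 1)
  | m + 1 => Rint b x0 n (fun x => r x * b 0 x * formalQ b r x0 n k m x) n

lemma cont_rint (b : ℕ → ℝ → ℝ) (hbc : ∀ m, Continuous (b m)) (x0 : ℝ) (N : ℕ)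
    {f : ℝ → ℝ} (hf : Continuous f) : ∀ m, Continuous (Rint b x0 N f m) := by
  intro m
  induction m with
  | zero => exact hf
  | succ m ih =>
    show Continuous fun x => ∫ s in x0..x, b (N - m) s * Rint b x0 N f m s
    have hg : Continuous fun s => b (N - m) s * Rint b x0 N f m s := (hbc _).mul ih
    exact continuous_iff_continuousAt.2 fun x =>
      ((hg.integral_hasStrictDerivAt x0 x).hasDerivAt).continuousAt

lemma dchain_rint (b : ℕ → ℝ → ℝ) (hbc : ∀ m, Continuous (b m))
    (hb0 : ∀ m, ∀ x : ℝ, b m x ≠ 0) (x0 : ℝ) (N : ℕ)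
    {f : ℝ → ℝ} (hf : Continuous f) :
    ∀ j, j ≤ N → Dchain b j (fun t => b 0 t * Rint b x0 N f N t) = Rint b x0 N f (N - j) := by
  intro j
  induction j with
  | zero =>
    intro _
    funext x
    show b 0 x * Rint b x0 N f N x / b 0 x = _
    rw [mul_comm, mul_div_assoc, div_self (hb0 0 x), mul_one]
    simp
  | succ j ih =>
    intro hj
    have hj' : j ≤ N := by omega
    funext x
    show deriv (Dchain b j _) x / b (j + 1) x = _
    rw [ih hj']
    have hrw : Rint b x0 N f (N - j)
        = fun x => ∫ s in x0..x, b (j + 1) s * Rint b x0 N f (N - (j + 1)) s := by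
      have h1 : N - j = (N - (j + 1)) + 1 := by omega
      have h2 : N - (N - (j + 1)) = j + 1 := by omega
      rw [h1]
      show (fun x => ∫ s in x0..x, b (N - (N - (j+1))) s * Rint b x0 N f (N - (j+1)) s) = _
      rw [h2]
    rw [hrw]
    have hg : Continuous fun s => b (j + 1) s * Rint b x0 N f (N - (j + 1)) s :=
      (hbc _).mul (cont_rint b hbc x0 N hf _)
    rw [Continuous.deriv_integral _ hg x0 x]
    rw [mul_comm, mul_div_assoc, div_self (hb0 (j+1) x), mul_one]

lemma dchain_const_mul (b : ℕ → ℝ → ℝ) (c : ℝ) (y : ℝ → ℝ) :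
    ∀ j, Dchain b j (fun x => c * y x) = fun x => c * Dchain b j y x := by
  intro j
  induction j with
  | zero =>
    funext x
    show c * y x / b 0 x = c * (y x / b 0 x)
    ring
  | succ j ih =>
    funext x
    show deriv (Dchain b j _) x / b (j + 1) x = c * (deriv (Dchain b j y) x / b (j + 1) x)
    rw [ih, deriv_const_mul_field]
    ring

lemma dchain_zero_of_zero (b : ℕ → ℝ → ℝ) (y : ℝ → ℝ) (j : ℕ)
    (h : Dchain b j y = fun _ => 0) : ∀ i, Dchain b (j + i) y = fun _ => 0 := by
  intro i
  induction i with
  | zero => exact h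
  | succ i ih =>
    funext x
    show deriv (Dchain b (j + i) y) x / b (j + i + 1) x = 0
    rw [ih]
    simp

theorem main_formal_powers_relation
    (n k : ℕ) (hn : 2 ≤ n) (hk : 1 ≤ k) (hkn : k ≤ n) (x0 : ℝ)
    (b : ℕ → ℝ → ℝ) (r : ℝ → ℝ)
    (hbc : ∀ m, Continuous (b m)) (hb0 : ∀ m, ∀ x : ℝ, b m x ≠ 0)
    (hr : Continuous r)
    (P : ℕ → ℝ → ℝ)
    (hP : ∀ m x, P m x = (Nat.factorial (m * n + k - 1) : ℝ) * formalQ b r x0 n k m x) :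
    (∀ x : ℝ, Dchain b n (fun t => b 0 t * P 0 t) x = 0) ∧
    (∀ m, 1 ≤ m → ∀ x : ℝ,
      Dchain b n (fun t => b 0 t * P m t) x
        = ((Nat.factorial (m * n + k - 1) : ℝ) /
            (Nat.factorial ((m - 1) * n + k - 1) : ℝ)) * (r x * b 0 x * P (m - 1) x)) := by
  have hQc : ∀ m, Continuous (formalQ b r x0 n k m) := by
    intro m
    induction m with
    | zero => exact cont_rint b hbc x0 (k - 1) continuous_const (k - 1)
    | succ m ih =>
      exact cont_rint b hbc x0 n ((hr.mul (hbc 0)).mul ih) n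
  constructor
  · -- m = 0 case
    intro x
    have key : ∀ m', Dchain b m' (fun t => b 0 t * P 0 t)
        = fun x => (Nat.factorial (0 * n + k - 1) : ℝ)
            * Dchain b m' (fun t => b 0 t * formalQ b r x0 n k 0 t) x := by
      intro m'
      have : (fun t => b 0 t * P 0 t)
          = fun t => (Nat.factorial (0 * n + k - 1) : ℝ)
              * (b 0 t * formalQ b r x0 n k 0 t) := by
        funext t; rw [hP]; ring
      rw [this, dchain_const_mul]
    rw [key n]
    have h0 : Dchain b (k - 1) (fun t => b 0 t * formalQ b r x0 n k 0 t)
        = fun _ => 1 := by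
      have := dchain_rint b hbc hb0 x0 (k - 1)
        (f := fun _ : ℝ => (1 : ℝ)) continuous_const (k - 1) le_rfl
      simpa [formalQ, I1, Rint] using this
    have hK : Dchain b ((k - 1) + 1) (fun t => b 0 t * formalQ b r x0 n k 0 t)
        = fun _ => 0 := by
      funext x
      show deriv (Dchain b (k - 1) _) x / b ((k - 1) + 1) x = 0
      rw [h0]
      simp
    have hz := dchain_zero_of_zero b _ _ hK (n - k)
    have hnk : (k - 1) + 1 + (n - k) = n := by omega
    rw [hnk] at hz
    rw [hz]
    simp
  · intro m hm x
    obtain ⟨m', rfl⟩ : ∃ m', m = m' + 1 := ⟨m - 1, by omega⟩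
    simp only [Nat.add_sub_cancel]
    set A : ℝ := (Nat.factorial ((m' + 1) * n + k - 1) : ℝ) with hA
    set B : ℝ := (Nat.factorial (m' * n + k - 1) : ℝ) with hB
    have hBne : B ≠ 0 := Nat.cast_ne_zero.2 (Nat.factorial_ne_zero _)
    have hrw : (fun t => b 0 t * P (m' + 1) t)
        = fun t => A * (b 0 t * formalQ b r x0 n k (m' + 1) t) := by
      funext t; rw [hP]; ring
    rw [hrw, dchain_const_mul]
    have hQ : Dchain b n (fun t => b 0 t * formalQ b r x0 n k (m' + 1) t)
        = Rint b x0 n (fun x => r x * b 0 x * formalQ b r x0 n k m' x) (n - n) := by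
      have hf : Continuous fun x => r x * b 0 x * formalQ b r x0 n k m' x :=
        (hr.mul (hbc 0)).mul (hQc m')
      exact dchain_rint b hbc hb0 x0 n hf n le_rfl
    simp only [Nat.sub_self] at hQ
    have hQ' : Dchain b n (fun t => b 0 t * formalQ b r x0 n k (m' + 1) t) x
        = r x * b 0 x * formalQ b r x0 n k m' x := by
      rw [hQ]; rfl
    simp only [hQ', hP]
    field_simp
    ring
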